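/- arXiv:1609.09603 — 4 statements merged into one kernel-verified Lean document; each statement's English description precedes it below -/
import Mathlib

section
/- (Kronecker's theorem) The Hankel operator Γ_f : ℓ²(ℕ,ℂ) → ℓ²(ℕ,ℂ), (Γ_f v)(k) = Σ_{j=0}^∞ f(k+j)·v(j), has rank exactly N; that is, its range is an N-dimensional subspace of ℓ²(ℕ,ℂ). -/
/-!
Since `f (k + i) = Σ_j a_j z_j^k z_j^i`, the operator factors through `ℂ^N`:
`Γ_f v = Σ_j (Σ_i z_j^i v_i) • a_j e_j` with `e_j = (z_j^k)_k ∈ ℓ²`. The moment map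
`v ↦ (Σ_i z_j^i v_i)_j` is onto, because on vectors supported in `{0, …, N-1}` it is the
Vandermonde matrix of the distinct `z_j`; and the `e_j` are independent, because their truncations
to `{0, …, N-1}` are the rows of that same matrix. So the range of `Γ_f` is `span {e_j}`, of
dimension `N`.
-/

open scoped ComplexConjugate InnerProductSpace Matrix

local notation "ℓ²" => lp (fun _ : ℕ => ℂ) 2

theorem memℓp_geometric {R : Type*} [NormedDivisionRing R] {p : ENNReal} (hp : 0 < p.toReal)
    {z : R} (hz : ‖z‖ < 1) : Memℓp (fun k : ℕ => z ^ k) p := by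
  refine memℓp_gen <| (summable_geometric_of_lt_one (by positivity)
    (Real.rpow_lt_one (norm_nonneg z) hz hp)).congr fun k => ?_
  rw [norm_pow, Real.rpow_pow_comm (norm_nonneg z)]

theorem Matrix.isUnit_vandermonde {K : Type*} [Field K] {n : ℕ} {z : Fin n → K}
    (hz : Function.Injective z) : IsUnit (Matrix.vandermonde z) :=
  (Matrix.isUnit_iff_isUnit_det _).2 <| isUnit_iff_ne_zero.2 <|
    Matrix.det_vandermonde_ne_zero_iff.2 hz

namespace Kronecker

noncomputable def geomVec (z : ℂ) (hz : ‖z‖ < 1) : ℓ² :=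
  ⟨fun k => z ^ k, memℓp_geometric (by norm_num) hz⟩

@[simp]
theorem coe_geomVec (z : ℂ) (hz : ‖z‖ < 1) : ⇑(geomVec z hz) = fun k => z ^ k := rfl

noncomputable def geomMoment (z : ℂ) (hz : ‖z‖ < 1) : ℓ² →L[ℂ] ℂ :=
  innerSL ℂ (geomVec (conj z) (by rwa [Complex.norm_conj]))

theorem geomMoment_apply {z : ℂ} (hz : ‖z‖ < 1) (v : ℓ²) :
    geomMoment z hz v = ∑' k, z ^ k * v k := by
  simp [geomMoment, lp.inner_eq_tsum, mul_comm]

theorem summable_pow_mul {z : ℂ} (hz : ‖z‖ < 1) (v : ℓ²) :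
    Summable fun k => z ^ k * v k := by
  refine (lp.summable_inner (geomVec (conj z) (by rwa [Complex.norm_conj])) v).congr fun k => ?_
  simp [mul_comm]

theorem geomMoment_single {z : ℂ} (hz : ‖z‖ < 1) (i : ℕ) (x : ℂ) :
    geomMoment z hz (lp.single 2 i x) = z ^ i * x := by
  have hsupport : ∀ k ≠ i, z ^ k * (lp.single 2 i x : ℓ²) k = 0 := fun k hk => by
    simp [lp.single_apply, Pi.single_eq_of_ne hk]
  rw [geomMoment_apply, tsum_eq_single i hsupport, lp.single_apply_self]

section

variable {N : ℕ} {z : Fin N → ℂ} (hz : ∀ j, ‖z j‖ < 1)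

noncomputable def momentMap : ℓ² →ₗ[ℂ] (Fin N → ℂ) :=
  LinearMap.pi fun j => (geomMoment (z j) (hz j) : ℓ² →ₗ[ℂ] ℂ)

theorem momentMap_sum_single (c : Fin N → ℂ) :
    momentMap hz (∑ i : Fin N, lp.single 2 (i : ℕ) (c i)) = Matrix.vandermonde z *ᵥ c := by
  ext j
  simp [momentMap, geomMoment_single, Matrix.mulVec, dotProduct, Matrix.vandermonde_apply]

theorem momentMap_surjective (hzinj : Function.Injective z) :
    Function.Surjective (momentMap hz) := by
  intro y
  obtain ⟨c, rfl⟩ := Matrix.mulVec_surjective_iff_isUnit.2 (Matrix.isUnit_vandermonde hzinj) y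
  exact ⟨_, momentMap_sum_single hz c⟩

theorem linearIndependent_geomVec (hzinj : Function.Injective z) :
    LinearIndependent ℂ fun j => geomVec (z j) (hz j) := by
  let truncate : ℓ² →ₗ[ℂ] (Fin N → ℂ) := LinearMap.pi fun k => lp.evalₗ _ 2 (k : ℕ)
  have htruncate : truncate ∘ (fun j => geomVec (z j) (hz j)) = (Matrix.vandermonde z).row := by
    ext j k
    simp [truncate, Matrix.vandermonde_apply]
  refine LinearIndependent.of_comp truncate ?_
  rw [htruncate]
  exact Matrix.linearIndependent_rows_iff_isUnit.2 (Matrix.isUnit_vandermonde hzinj)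

theorem hankel_eq_linearCombination_comp_momentMap {a : Fin N → ℂ} {f : ℕ → ℂ}
    (hf : ∀ k, f k = ∑ j, a j * z j ^ k) {Γ : ℓ² →L[ℂ] ℓ²}
    (hΓ : ∀ v : ℓ², ∀ k, (Γ v : ∀ _ : ℕ, ℂ) k = ∑' i, f (k + i) * v i) :
    (Γ : ℓ² →ₗ[ℂ] ℓ²) =
      Fintype.linearCombination ℂ (fun j => a j • geomVec (z j) (hz j)) ∘ₗ momentMap hz := by
  ext v k
  have hterm : ∀ i, f (k + i) * v i = ∑ j, a j * z j ^ k * (z j ^ i * v i) := fun i => by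
    simp only [hf, Finset.sum_mul, pow_add]
    exact Finset.sum_congr rfl fun j _ => by ring
  simp only [LinearMap.comp_apply, ContinuousLinearMap.coe_coe, hΓ, hterm,
    Summable.tsum_finsetSum fun j _ => (summable_pow_mul (hz j) v).mul_left _, tsum_mul_left,
    Fintype.linearCombination_apply, lp.coeFn_sum, Finset.sum_apply, lp.coeFn_smul, Pi.smul_apply,
    smul_eq_mul, momentMap, LinearMap.pi_apply, geomMoment_apply,
    coe_geomVec]
  exact Finset.sum_congr rfl fun j _ => by ring

end

end Kronecker

theorem stmt_2_general (N : ℕ) (a z : Fin N → ℂ)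
    (ha : ∀ j, a j ≠ 0) (hzinj : Function.Injective z)
    (hz : ∀ j, 0 < ‖z j‖ ∧ ‖z j‖ < 1)
    (f : ℕ → ℂ) (hf : ∀ k, f k = ∑ j, a j * z j ^ k)
    (Γ : lp (fun _ : ℕ => ℂ) 2 →L[ℂ] lp (fun _ : ℕ => ℂ) 2)
    (hΓ : ∀ v : lp (fun _ : ℕ => ℂ) 2, ∀ k : ℕ, (Γ v : ∀ _ : ℕ, ℂ) k = ∑' j, f (k + j) * v j) :
    Module.rank ℂ
      (LinearMap.range (Γ : lp (fun _ : ℕ => ℂ) 2 →ₗ[ℂ] lp (fun _ : ℕ => ℂ) 2)) = N := by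
  have hz₁ : ∀ j, ‖z j‖ < 1 := fun j => (hz j).2
  have hindep : LinearIndependent ℂ fun j => a j • Kronecker.geomVec (z j) (hz₁ j) :=
    (Kronecker.linearIndependent_geomVec hz₁ hzinj).units_smul fun j => Units.mk0 (a j) (ha j)
  rw [Kronecker.hankel_eq_linearCombination_comp_momentMap hz₁ hf hΓ,
    LinearMap.range_comp_of_range_eq_top _
      (LinearMap.range_eq_top.2 (Kronecker.momentMap_surjective hz₁ hzinj)),
    rank_range_of_injective _ hindep.fintypeLinearCombination_injective, rank_fin_fun]

/-- Kronecker's theorem: the Hankel operator `Γ_f` on `ℓ²(ℕ,ℂ)`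
generated by `f(k) = Σ_{j=1}^N a_j z_j^k` has rank exactly `N`. -/
theorem stmt_2 (N : ℕ) (hN : 1 ≤ N) (a z : Fin N → ℂ)
    (ha : ∀ j, a j ≠ 0) (hzinj : Function.Injective z)
    (hz : ∀ j, 0 < ‖z j‖ ∧ ‖z j‖ < 1)
    (f : ℕ → ℂ) (hf : ∀ k, f k = ∑ j, a j * z j ^ k)
    (Γ : lp (fun _ : ℕ => ℂ) 2 →L[ℂ] lp (fun _ : ℕ => ℂ) 2)
    (hΓ : ∀ v : lp (fun _ : ℕ => ℂ) 2, ∀ k : ℕ, (Γ v : ∀ _ : ℕ, ℂ) k = ∑' j, f (k + j) * v j) :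
    Module.rank ℂ
      (LinearMap.range (Γ : lp (fun _ : ℕ => ℂ) 2 →ₗ[ℂ] lp (fun _ : ℕ => ℂ) 2)) = N :=
  stmt_2_general N a z ha hzinj hz f hf Γ hΓ
end

section
/- Suppose σ ∈ ℂ with σ ≠ 0 and v ∈ ℓ²(ℕ,ℂ) satisfy Γ_f(conj∘v) = σ·v. Then for every z ∈ ℂ with |z| < 1: σ · Σ_{k=0}^∞ v(k)·z^k = Σ_{j=1}^N a_j · (Σ_{r=0}^∞ conj(v(r))·z_j^r) / (1 − z_j·z). In particular, the Laurent series P_v(z) = Σ_{k=0}^∞ v(k)·z^k is a rational function of z whose numerator is a polynomial of degree at most N−1. -/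
/-!
Because `f` is an exponential sum with nodes `z_j`, the Hankel operator `Γ_f` sends every bounded
sequence `u` to an exponential sum with the same nodes:
`(Γ_f u)(k) = ∑_j a_j (∑_r u_r z_j^r) z_j^k`. The eigenvalue equation thus makes `σ v` such a sum,
so its generating function is a sum of geometric series `∑_j b_j / (1 - z_j w)`; multiplying by
`∏_j (1 - z_j w)` clears the denominators and leaves a polynomial of degree `< N`.
-/

open Polynomial

theorem Memℓp.exists_norm_le {α E : Type*} [NormedAddCommGroup E] {v : α → E} {p : ENNReal}
    (hv : Memℓp v p) : ∃ B, ∀ r, ‖v r‖ ≤ B := by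
  obtain ⟨B, hB⟩ := memℓp_infty_iff.mp (hv.of_exponent_ge le_top)
  exact ⟨B, fun r => hB ⟨r, rfl⟩⟩

theorem summable_mul_pow_of_norm_le {R : Type*} [NormedRing R] [NormOneClass R] [CompleteSpace R]
    {u : ℕ → R} {B : ℝ} (hu : ∀ r, ‖u r‖ ≤ B) {t : R} (ht : ‖t‖ < 1) :
    Summable fun r => u r * t ^ r :=
  .of_norm_bounded ((summable_geometric_of_lt_one (norm_nonneg t) ht).mul_left B) fun r =>
    (norm_mul_le _ _).trans <| mul_le_mul (hu r) (norm_pow_le _ _) (norm_nonneg _)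
      ((norm_nonneg _).trans (hu r))

section

variable {ι K : Type*} [Fintype ι]

theorem tsum_sum_mul_pow_add_mul [NormedField K] [CompleteSpace K] {a z : ι → K}
    (hz : ∀ j, ‖z j‖ < 1) {u : ℕ → K} {B : ℝ}
    (hu : ∀ r, ‖u r‖ ≤ B) (k : ℕ) :
    ∑' r, (∑ j, a j * z j ^ (k + r)) * u r =
      ∑ j, a j * (∑' r, u r * z j ^ r) * z j ^ k := by
  have hterm : ∀ r, (∑ j, a j * z j ^ (k + r)) * u r =
      ∑ j, a j * z j ^ k * (u r * z j ^ r) := fun r => by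
    rw [Finset.sum_mul]
    exact Finset.sum_congr rfl fun j _ => by ring
  rw [tsum_congr hterm, Summable.tsum_finsetSum fun j _ =>
    (summable_mul_pow_of_norm_le hu (hz j)).mul_left _]
  exact Finset.sum_congr rfl fun j _ => by rw [tsum_mul_left]; ring

theorem tsum_sum_mul_pow_mul_pow [NormedField K] [CompleteSpace K] {b z : ι → K} {w : K}
    (hzw : ∀ j, ‖z j * w‖ < 1) :
    ∑' k : ℕ, (∑ j, b j * z j ^ k) * w ^ k = ∑ j, b j / (1 - z j * w) := by
  have hterm : ∀ k : ℕ, (∑ j, b j * z j ^ k) * w ^ k = ∑ j, b j * (z j * w) ^ k := fun k => by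
    rw [Finset.sum_mul]
    exact Finset.sum_congr rfl fun j _ => by ring
  rw [tsum_congr hterm, Summable.tsum_finsetSum fun j _ =>
    (summable_geometric_of_norm_lt_one (hzw j)).mul_left _]
  exact Finset.sum_congr rfl fun j _ => by
    rw [tsum_mul_left, tsum_geometric_of_norm_lt_one (hzw j), div_eq_mul_inv]

theorem natDegree_one_sub_C_mul_X_le {R : Type*} [CommRing R] (c : R) :
    (1 - C c * X).natDegree ≤ 1 := by
  simpa [sub_eq_neg_add, add_comm] using natDegree_linear_le (a := -c) (b := 1)

theorem exists_natDegree_le_sum_div_mul_prod_eq_eval [Field K] (b z : ι → K) :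
    ∃ q : K[X], q.natDegree ≤ Fintype.card ι - 1 ∧
      ∀ w : K, (∀ j, 1 - z j * w ≠ 0) →
        (∑ j, b j / (1 - z j * w)) * ∏ j, (1 - z j * w) = q.eval w := by
  classical
  refine ⟨∑ j, C (b j) * ∏ i ∈ Finset.univ.erase j, (1 - C (z i) * X), ?_, fun w hw => ?_⟩
  · refine natDegree_sum_le_of_forall_le _ _ fun j _ => (natDegree_C_mul_le _ _).trans ?_
    calc (∏ i ∈ Finset.univ.erase j, (1 - C (z i) * X)).natDegree
        ≤ ∑ i ∈ Finset.univ.erase j, (1 - C (z i) * X).natDegree := natDegree_prod_le _ _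
      _ ≤ ∑ _i ∈ Finset.univ.erase j, 1 := by
          gcongr with i
          exact natDegree_one_sub_C_mul_X_le _
      _ = Fintype.card ι - 1 := by simp [Finset.card_erase_of_mem]
  · simp only [Finset.sum_mul, eval_finsetSum, eval_mul, eval_C, eval_prod, eval_sub, eval_one,
      eval_X]
    refine Finset.sum_congr rfl fun j _ => ?_
    rw [← Finset.mul_prod_erase _ _ (Finset.mem_univ j), ← mul_assoc, div_mul_cancel₀ _ (hw j)]

end

theorem stmt_5_general (N : ℕ) (a z : Fin N → ℂ)
    (hz : ∀ j, 0 < ‖z j‖ ∧ ‖z j‖ < 1)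
    (f : ℕ → ℂ) (hf : ∀ k, f k = ∑ j, a j * z j ^ k)
    (σ : ℂ) (v : ℕ → ℂ) (hv : Memℓp v 2)
    (heig : ∀ k : ℕ, ∑' r, f (k + r) * (starRingEnd ℂ) (v r) = σ * v k) :
    (∀ w : ℂ, ‖w‖ < 1 →
      σ * ∑' k : ℕ, v k * w ^ k =
        ∑ j, a j * (∑' r : ℕ, (starRingEnd ℂ) (v r) * z j ^ r) / (1 - z j * w)) ∧
    ∃ q : Polynomial ℂ, q.natDegree ≤ N - 1 ∧
      ∀ w : ℂ, ‖w‖ < 1 →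
        (σ * ∑' k : ℕ, v k * w ^ k) * ∏ j, (1 - z j * w) = q.eval w := by
  obtain ⟨B, hB⟩ := hv.exists_norm_le
  set c : Fin N → ℂ := fun j => ∑' r, (starRingEnd ℂ) (v r) * z j ^ r
  have hσv : ∀ k, σ * v k = ∑ j, a j * c j * z j ^ k := fun k => by
    rw [← heig k, ← tsum_sum_mul_pow_add_mul (fun j => (hz j).2)
      (u := fun r => (starRingEnd ℂ) (v r)) (fun r => (RCLike.norm_conj _).trans_le (hB r))]
    simp only [hf]
  have hzw : ∀ w : ℂ, ‖w‖ < 1 → ∀ j, ‖z j * w‖ < 1 := fun w hw j => by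
    rw [norm_mul]
    exact mul_lt_one_of_nonneg_of_lt_one_left (norm_nonneg _) (hz j).2 hw.le
  have hseries : ∀ w : ℂ, ‖w‖ < 1 →
      σ * ∑' k : ℕ, v k * w ^ k = ∑ j, a j * c j / (1 - z j * w) := fun w hw => by
    simp_rw [← tsum_mul_left, ← mul_assoc, hσv]
    exact tsum_sum_mul_pow_mul_pow (hzw w hw)
  obtain ⟨q, hq, hqeval⟩ := exists_natDegree_le_sum_div_mul_prod_eq_eval (fun j => a j * c j) z
  refine ⟨hseries, q, by simpa using hq, fun w hw => ?_⟩
  have hne : ∀ j, 1 - z j * w ≠ 0 := fun j h => by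
    simpa [← sub_eq_zero.mp h] using hzw w hw j
  rw [hseries w hw, hqeval w hne]

/-- If `σ ≠ 0` and `v ∈ ℓ²` satisfy `Γ_f(conj∘v) = σ·v`, then for every
`z` with `|z| < 1`: `σ·Σ_k v(k)·z^k = Σ_j a_j·(Σ_r conj(v(r))·z_j^r)/(1 − z_j·z)`.
In particular `P_v` is rational with numerator a polynomial of degree at most `N−1`. -/
theorem stmt_5 (N : ℕ) (hN : 1 ≤ N) (a z : Fin N → ℂ)
    (ha : ∀ j, a j ≠ 0) (hzinj : Function.Injective z)
    (hz : ∀ j, 0 < ‖z j‖ ∧ ‖z j‖ < 1)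
    (f : ℕ → ℂ) (hf : ∀ k, f k = ∑ j, a j * z j ^ k)
    (σ : ℂ) (hσ : σ ≠ 0) (v : ℕ → ℂ) (hv : Memℓp v 2)
    (heig : ∀ k : ℕ, ∑' r, f (k + r) * (starRingEnd ℂ) (v r) = σ * v k) :
    (∀ w : ℂ, ‖w‖ < 1 →
      σ * ∑' k : ℕ, v k * w ^ k =
        ∑ j, a j * (∑' r : ℕ, (starRingEnd ℂ) (v r) * z j ^ r) / (1 - z j * w)) ∧
    ∃ q : Polynomial ℂ, q.natDegree ≤ N - 1 ∧
      ∀ w : ℂ, ‖w‖ < 1 →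
        (σ * ∑' k : ℕ, v k * w ^ k) * ∏ j, (1 - z j * w) = q.eval w :=
  stmt_5_general N a z hz f hf σ v hv heig
end

section
/- Let n ≥ 1, let M be an n×n complex matrix, let σ ∈ ℝ with σ ≥ 0, and let w ∈ ℂⁿ satisfy conj(M)·M·w = σ²·w, where conj(M) denotes the entrywise complex conjugate of M. Then the vector v := M·w + σ·conj(w) satisfies M·conj(v) = σ·v, where conj(w) and conj(v) denote entrywise complex conjugation. -/
/-- If `conj(M)·M·w = σ²·w` with `σ ≥ 0`, then `v := M·w + σ·conj(w)`
satisfies `M·conj(v) = σ·v`. -/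
theorem stmt_6 (n : ℕ) (hn : 1 ≤ n) (M : Matrix (Fin n) (Fin n) ℂ)
    (σ : ℝ) (hσ : 0 ≤ σ) (w : Fin n → ℂ)
    (hw : (M.map (starRingEnd ℂ)).mulVec (M.mulVec w) = ((σ : ℂ) ^ 2) • w) :
    M.mulVec (fun i => (starRingEnd ℂ)
        ((M.mulVec w + (σ : ℂ) • fun i' => (starRingEnd ℂ) (w i')) i)) =
      (σ : ℂ) • (M.mulVec w + (σ : ℂ) • fun i' => (starRingEnd ℂ) (w i')) := by
  funext i
  have hwi := congrFun hw
  simp only [Matrix.mulVec, dotProduct, Matrix.map_apply, Pi.smul_apply,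
    Pi.add_apply, smul_eq_mul] at hwi ⊢
  have key : ∀ j, (starRingEnd ℂ) (∑ k, M j k * w k) =
      ∑ k, (starRingEnd ℂ) (M j k) * (starRingEnd ℂ) (w k) := by
    intro j; simp [map_sum]
  calc ∑ j, M i j * (starRingEnd ℂ) ((∑ k, M j k * w k) + (σ : ℂ) * (starRingEnd ℂ) (w j))
      = ∑ j, (M i j * (starRingEnd ℂ) (∑ k, M j k * w k) + (σ : ℂ) * (M i j * w j)) := by
        apply Finset.sum_congr rfl; intro j _
        simp [map_add, map_mul, Complex.conj_ofReal]; ring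
    _ = (starRingEnd ℂ) (∑ j, (starRingEnd ℂ) (M i j) * ∑ k, M j k * w k)
          + (σ : ℂ) * ∑ j, M i j * w j := by
        simp [map_sum, map_mul, Finset.sum_add_distrib, Finset.mul_sum]
    _ = (starRingEnd ℂ) ((σ : ℂ) ^ 2 * w i) + (σ : ℂ) * ∑ j, M i j * w j := by
        rw [hwi i]
    _ = (σ : ℂ) * ((∑ j, M i j * w j) + (σ : ℂ) * (starRingEnd ℂ) (w i)) := by
        simp [map_mul, Complex.conj_ofReal]; ring
end

section
/- Let f, g ∈ ℓ¹(ℕ,ℂ) and p ∈ {1,2}. Then Γ_f g ∈ ℓ¹(ℕ,ℂ), and the composition Γ_f ∘ T_g is the Hankel operator generated by Γ_f g; that is, for every v ∈ ℓᵖ(ℕ,ℂ) and every k ∈ ℕ: (Γ_f(g∗v))(k) = Σ_{j=0}^∞ (Γ_f g)(k+j)·v(j). -/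
open Function

/-- Bounded sequences from p-summability. -/
lemma aux_bdd (p : ℝ) (hp : p = 1 ∨ p = 2) (v : ℕ → ℂ)
    (hv : Summable fun k => ‖v k‖ ^ p) : ∃ M : ℝ, ∀ k, ‖v k‖ ≤ M := by
  have hp0 : (0:ℝ) < p := by rcases hp with h | h <;> rw [h] <;> norm_num
  have h1 : Filter.Tendsto (fun k => ‖v k‖ ^ p) Filter.atTop (nhds 0) :=
    hv.tendsto_atTop_zero
  have h2 : Filter.Tendsto (fun k => ‖v k‖) Filter.atTop (nhds 0) := by
    have hc : ContinuousAt (fun x : ℝ => x ^ (1/p)) 0 :=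
      Real.continuousAt_rpow_const 0 (1/p) (Or.inr (by positivity))
    have h3 := hc.tendsto.comp h1
    have h4 : ((0:ℝ) ^ (1/p)) = 0 := Real.zero_rpow (by positivity)
    rw [h4] at h3
    convert h3 using 2 with k
    simp only [comp_apply]
    rw [← Real.rpow_mul (norm_nonneg _), mul_one_div, div_self hp0.ne', Real.rpow_one]
  obtain ⟨M, hM⟩ := h2.bddAbove_range
  exact ⟨M, fun k => hM ⟨k, rfl⟩⟩

/-- Key double-sum summability. -/
lemma aux_sum (F G w : ℕ → ℝ) (hF : Summable F) (hG : Summable G)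
    (hFnn : ∀ n, 0 ≤ F n) (hGnn : ∀ n, 0 ≤ G n) (hwnn : ∀ n, 0 ≤ w n)
    (M : ℝ) (hwM : ∀ n, w n ≤ M) :
    Summable (fun q : ℕ × ℕ => F (q.1 + q.2) * G q.2 * w q.1) := by
  have hprod : Summable (fun q : ℕ × ℕ => F q.1 * G q.2) :=
    hF.mul_of_nonneg hG hFnn hGnn
  have hM : Summable (fun q : ℕ × ℕ => M * (F q.1 * G q.2)) := hprod.mul_left M
  have hΦ : Injective (fun q : ℕ × ℕ => ((q.1 + q.2, q.2) : ℕ × ℕ)) := by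
    rintro ⟨a1, a2⟩ ⟨b1, b2⟩ h
    simp only [Prod.mk.injEq] at h
    obtain ⟨h1, h2⟩ := h
    subst h2
    exact Prod.ext (by omega) rfl
  have hcomp := hM.comp_injective hΦ
  refine Summable.of_nonneg_of_le
    (fun q => mul_nonneg (mul_nonneg (hFnn _) (hGnn _)) (hwnn _)) (fun q => ?_) hcomp
  calc F (q.1 + q.2) * G q.2 * w q.1 ≤ F (q.1 + q.2) * G q.2 * M :=
        mul_le_mul_of_nonneg_left (hwM _) (mul_nonneg (hFnn _) (hGnn _))
    _ = M * (F (q.1 + q.2) * G q.2) := by ring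

/-- The causal convolution on ℕ: `(g∗v)(k) = Σ_{j=0}^k g(k−j)·v(j)`. -/
noncomputable def convSeq (g v : ℕ → ℂ) : ℕ → ℂ :=
  fun k => ∑ j ∈ Finset.range (k + 1), g (k - j) * v j

/-- For `f, g ∈ ℓ¹` and `p ∈ {1,2}`, `Γ_f g ∈ ℓ¹` and `Γ_f ∘ T_g` is the
Hankel operator generated by `Γ_f g`: `(Γ_f(g∗v))(k) = Σ_j (Γ_f g)(k+j)·v(j)`. -/
theorem stmt_10 (f g : ℕ → ℂ) (hf : Summable fun k => ‖f k‖)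
    (hg : Summable fun k => ‖g k‖)
    (p : ℝ) (hp : p = 1 ∨ p = 2)
    (v : ℕ → ℂ) (hv : Summable fun k => ‖v k‖ ^ p) :
    (Summable fun k => ‖∑' j, f (k + j) * g j‖) ∧
    ∀ k : ℕ, ∑' j, f (k + j) * convSeq g v j =
      ∑' j : ℕ, (∑' r : ℕ, f ((k + j) + r) * g r) * v j := by
  obtain ⟨M, hM⟩ := aux_bdd p hp v hv
  have hshift : ∀ k : ℕ, Summable (fun n => ‖f (k + n)‖) := fun k =>
    hf.comp_injective (add_right_injective k)
  constructor
  · -- Part 1: ℓ¹ membership of Γ_f g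
    have hH : Summable (fun q : ℕ × ℕ => ‖f (q.1 + q.2)‖ * ‖g q.2‖) := by
      have := aux_sum (fun n => ‖f n‖) (fun n => ‖g n‖) (fun _ => 1) hf hg
        (fun n => norm_nonneg _) (fun n => norm_nonneg _) (fun _ => zero_le_one)
        1 (fun _ => le_refl 1)
      simpa using this
    have hA : Summable (fun k => ∑' r, ‖f (k + r)‖ * ‖g r‖) :=
      ((summable_prod_of_nonneg
        (fun q => mul_nonneg (norm_nonneg _) (norm_nonneg _))).mp hH).2
    refine Summable.of_nonneg_of_le (fun k => norm_nonneg _) (fun k => ?_) hA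
    have hsn : Summable (fun r => ‖f (k + r)‖ * ‖g r‖) := by
      refine Summable.of_nonneg_of_le
        (fun r => mul_nonneg (norm_nonneg _) (norm_nonneg _)) (fun r => ?_)
        (hg.mul_left (∑' n, ‖f n‖))
      exact mul_le_mul_of_nonneg_right
        (Summable.le_tsum hf (k + r) (fun _ _ => norm_nonneg _)) (norm_nonneg _)
    have hsn' : Summable (fun r => ‖f (k + r) * g r‖) := by
      simpa only [norm_mul] using hsn
    calc ‖∑' r, f (k + r) * g r‖ ≤ ∑' r, ‖f (k + r) * g r‖ := norm_tsum_le_tsum_norm hsn'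
      _ = ∑' r, ‖f (k + r)‖ * ‖g r‖ := by simp only [norm_mul]
  · -- Part 2
    intro k
    set F : ℕ × ℕ → ℂ := fun q => f (k + q.1 + q.2) * g q.2 * v q.1 with hFdef
    have hFs : Summable F := by
      apply Summable.of_norm
      have := aux_sum (fun n => ‖f (k + n)‖) (fun n => ‖g n‖) (fun n => ‖v n‖)
        (hshift k) hg (fun _ => norm_nonneg _) (fun _ => norm_nonneg _)
        (fun _ => norm_nonneg _) M hM
      refine this.congr fun q => ?_
      simp [hFdef, norm_mul, add_assoc]
    set G : ℕ × ℕ → ℂ := fun q =>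
      f (k + q.1) * (if q.2 ≤ q.1 then g (q.1 - q.2) else 0) * v q.2 with hGdef
    set e : ℕ × ℕ → ℕ × ℕ := fun q => (q.1 + q.2, q.1) with hedef
    have he : Injective e := by
      rintro ⟨a1, a2⟩ ⟨b1, b2⟩ h
      simp only [hedef, Prod.mk.injEq] at h
      obtain ⟨h1, h2⟩ := h
      subst h2
      exact Prod.ext rfl (by omega)
    have hGe : G ∘ e = F := by
      funext q
      obtain ⟨i, r⟩ := q
      show f (k + (i + r)) * (if i ≤ i + r then g (i + r - i) else 0) * v i =
        f (k + i + r) * g r * v i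
      rw [if_pos (Nat.le_add_right i r), Nat.add_sub_cancel_left, ← add_assoc]
    have hsupp : Function.support G ⊆ Set.range e := by
      rintro ⟨j, i⟩ hq
      by_cases hij : i ≤ j
      · refine ⟨(i, j - i), ?_⟩
        show (i + (j - i), i) = (j, i)
        rw [Prod.mk.injEq]
        exact ⟨by omega, rfl⟩
      · exfalso; apply hq; simp [hGdef, if_neg hij]
    have hsupp' : ∀ x ∉ Set.range e, G x = 0 := fun x hx => by
      by_contra h0
      exact hx (hsupp h0)
    have hGs : Summable G := (he.summable_iff hsupp').mp (by rw [hGe]; exact hFs)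
    have htsum : (∑' q : ℕ × ℕ, F q) = ∑' q : ℕ × ℕ, G q := by
      rw [← he.tsum_eq hsupp]
      exact tsum_congr fun q => (congrFun hGe q).symm
    have hLHS : (∑' j, f (k + j) * convSeq g v j) = ∑' q : ℕ × ℕ, G q := by
      rw [Summable.tsum_prod' hGs hGs.prod_factor]
      refine tsum_congr fun j => ?_
      have h1 : (∑' i, G (j, i)) = ∑ i ∈ Finset.range (j + 1),
          f (k + j) * g (j - i) * v i := by
        rw [tsum_eq_sum (s := Finset.range (j + 1)) ?_]
        · refine Finset.sum_congr rfl fun i hi => ?_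
          rw [Finset.mem_range] at hi
          simp [hGdef, if_pos (by omega : i ≤ j)]
        · intro i hi
          rw [Finset.mem_range] at hi
          simp [hGdef, if_neg (by omega : ¬ i ≤ j)]
      rw [h1, convSeq, Finset.mul_sum]
      exact (Finset.sum_congr rfl fun i _ => by ring).symm
    have hRHS : (∑' q : ℕ × ℕ, F q) =
        ∑' j : ℕ, (∑' r : ℕ, f ((k + j) + r) * g r) * v j := by
      rw [Summable.tsum_prod' hFs hFs.prod_factor]
      refine tsum_congr fun j => ?_
      rw [← tsum_mul_right]
    rw [hLHS, ← htsum, hRHS]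
end
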